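/- arXiv:1712.08277 — 6 statements merged into one kernel-verified Lean document; each statement's English description precedes it below -/
import Mathlib

section
/- Let G be a symmetric N×N real matrix and K an n×n real matrix with K + Kᵀ positive semidefinite. Then the minimum eigenvalue of the symmetric matrix ((G ⊗ K) + (G ⊗ K)ᵀ)/2 is at least −|λ_min(G)|·‖K‖₂, provided λ_min(G) < 0. -/
open Matrix Kronecker

/-!
With `S = (K + Kᵀ)/2 ⪰ 0` and `G` symmetric, the matrix in question is `G ⊗ S`. Since
`G - λ_min(G) • 1 ⪰ 0`, also `(G - λ_min(G) • 1) ⊗ S ⪰ 0`, so for an eigenvector `v`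
`μ |v|² = vᵀ (G ⊗ S) v ≥ λ_min(G) · vᵀ (1 ⊗ S) v`. Blockwise, `vᵀ (1 ⊗ S) v = ∑ᵢ vᵢᵀ K vᵢ ≤ ‖K‖₂ |v|²`,
and `λ_min(G) < 0` turns this upper bound into the claimed lower bound on `μ`.
-/

namespace Matrix

open scoped ComplexOrder MatrixOrder in
theorem IsHermitian.posSemidef_sub_smul_one {m 𝕜 : Type*} [Fintype m] [DecidableEq m]
    [RCLike 𝕜] {A : Matrix m m 𝕜} (hA : A.IsHermitian) {c : ℝ}
    (hc : ∀ i, c ≤ hA.eigenvalues i) : (A - c • (1 : Matrix m m 𝕜)).PosSemidef := by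
  rw [← le_iff, ← Algebra.algebraMap_eq_smul_one,
    algebraMap_le_iff_le_spectrum hA.isSelfAdjoint, hA.spectrum_real_eq_range_eigenvalues]
  rintro _ ⟨i, rfl⟩
  exact hc i

theorem kronecker_add_transpose_of_isSymm {l m R : Type*} [CommSemiring R]
    {A : Matrix l l R} (hA : A.IsSymm) (B : Matrix m m R) :
    A ⊗ₖ B + (A ⊗ₖ B)ᵀ = A ⊗ₖ (B + Bᵀ) := by
  rw [← kroneckerMap_transpose, hA.eq, kronecker_add]

theorem dotProduct_one_kronecker_mulVec {l m R : Type*} [Fintype l] [Fintype m] [DecidableEq l]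
    [CommSemiring R] (B : Matrix m m R) (v : l × m → R) :
    v ⬝ᵥ ((1 : Matrix l l R) ⊗ₖ B) *ᵥ v = ∑ i, (fun k => v (i, k)) ⬝ᵥ B *ᵥ fun k => v (i, k) := by
  simp only [dotProduct, mulVec, Fintype.sum_prod_type, kroneckerMap_apply, one_apply,
    ite_mul, one_mul, zero_mul, Finset.mul_sum]
  refine Finset.sum_congr rfl fun i _ => Finset.sum_congr rfl fun k _ => ?_
  rw [Finset.sum_comm]
  simp

theorem dotProduct_one_kronecker_mulVec_le {l m : Type*} [Fintype l] [Fintype m] [DecidableEq l]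
    [DecidableEq m] {B : Matrix m m ℝ} {c : ℝ} (hB : ∀ x, x ⬝ᵥ B *ᵥ x ≤ c * (x ⬝ᵥ x))
    (v : l × m → ℝ) : v ⬝ᵥ ((1 : Matrix l l ℝ) ⊗ₖ B) *ᵥ v ≤ c * (v ⬝ᵥ v) := by
  have hv : v ⬝ᵥ v = ∑ i, (fun k => v (i, k)) ⬝ᵥ fun k => v (i, k) := by
    simpa [one_kronecker_one] using dotProduct_one_kronecker_mulVec (l := l) (1 : Matrix m m ℝ) v
  rw [dotProduct_one_kronecker_mulVec, hv, Finset.mul_sum]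
  exact Finset.sum_le_sum fun i _ => hB _

theorem IsHermitian.mul_dotProduct_one_kronecker_mulVec_le {l m : Type*} [Fintype l] [Fintype m]
    [DecidableEq l] {A : Matrix l l ℝ} (hA : A.IsHermitian) {c : ℝ}
    (hc : ∀ i, c ≤ hA.eigenvalues i) {B : Matrix m m ℝ} (hB : B.PosSemidef) (v : l × m → ℝ) :
    c * (v ⬝ᵥ ((1 : Matrix l l ℝ) ⊗ₖ B) *ᵥ v) ≤ v ⬝ᵥ (A ⊗ₖ B) *ᵥ v := by
  have h := ((hA.posSemidef_sub_smul_one hc).kronecker hB).dotProduct_mulVec_nonneg v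
  rw [star_trivial] at h
  have hsplit : A ⊗ₖ B = (A - c • 1) ⊗ₖ B + c • ((1 : Matrix l l ℝ) ⊗ₖ B) := by
    rw [← smul_kronecker, ← add_kronecker, sub_add_cancel]
  rw [hsplit, add_mulVec, dotProduct_add, smul_mulVec, dotProduct_smul, smul_eq_mul]
  linarith

theorem dotProduct_mulVec_le_norm_toEuclideanCLM {m : Type*} [Fintype m] [DecidableEq m]
    (A : Matrix m m ℝ) (x : m → ℝ) :
    x ⬝ᵥ A *ᵥ x ≤ ‖toEuclideanCLM (𝕜 := ℝ) A‖ * (x ⬝ᵥ x) := by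
  set x' : EuclideanSpace ℝ m := WithLp.toLp 2 x
  have h1 : x ⬝ᵥ A *ᵥ x = inner ℝ x' (toEuclideanCLM (𝕜 := ℝ) A x') := by
    simp [x', EuclideanSpace.inner_eq_star_dotProduct, dotProduct_comm]
  have h2 : x ⬝ᵥ x = ‖x'‖ ^ 2 := by
    rw [← real_inner_self_eq_norm_sq, EuclideanSpace.inner_eq_star_dotProduct]
    simp [x']
  calc x ⬝ᵥ A *ᵥ x ≤ ‖x'‖ * ‖toEuclideanCLM (𝕜 := ℝ) A x'‖ := h1 ▸ real_inner_le_norm _ _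
    _ ≤ ‖x'‖ * (‖toEuclideanCLM (𝕜 := ℝ) A‖ * ‖x'‖) := by
        gcongr
        exact ContinuousLinearMap.le_opNorm _ _
    _ = _ := by rw [h2]; ring

end Matrix

/-- If `G = Gᵀ` with `λ_min(G) < 0` and `K + Kᵀ ⪰ 0`, then every
eigenvalue `μ` of the symmetric matrix `((G ⊗ K) + (G ⊗ K)ᵀ)/2` satisfies
`μ ≥ -|λ_min(G)| ⬝ ‖K‖₂`. -/
theorem stmt4 (N n : ℕ) (hN : 0 < N) (G : Matrix (Fin N) (Fin N) ℝ)
    (K : Matrix (Fin n) (Fin n) ℝ) (hG : G.IsHermitian)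
    (hK : (K + Kᵀ).PosSemidef)
    (hmin : Finset.univ.inf' (Finset.univ_nonempty_iff.mpr ⟨⟨0, hN⟩⟩) hG.eigenvalues < 0)
    (μ : ℝ) (v : Fin N × Fin n → ℝ) (hv : v ≠ 0)
    (hμ : ((1 / 2 : ℝ) • (G ⊗ₖ K + (G ⊗ₖ K)ᵀ)).mulVec v = μ • v) :
    -(|Finset.univ.inf' (Finset.univ_nonempty_iff.mpr ⟨⟨0, hN⟩⟩) hG.eigenvalues| *
        ‖Matrix.toEuclideanCLM (𝕜 := ℝ) K‖) ≤ μ := by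
  set lam := Finset.univ.inf' (Finset.univ_nonempty_iff.mpr ⟨⟨0, hN⟩⟩) hG.eigenvalues
  set S : Matrix (Fin n) (Fin n) ℝ := (1 / 2 : ℝ) • (K + Kᵀ)
  have hGS : (1 / 2 : ℝ) • (G ⊗ₖ K + (G ⊗ₖ K)ᵀ) = G ⊗ₖ S := by
    rw [kronecker_add_transpose_of_isSymm (isHermitian_iff_isSymm.mp hG), kronecker_smul]
  have hS : S.PosSemidef := hK.smul (by norm_num)
  have hSK (x : Fin n → ℝ) : x ⬝ᵥ S *ᵥ x = x ⬝ᵥ K *ᵥ x := by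
    simp only [S, smul_mulVec, add_mulVec, dotProduct_smul, dotProduct_add,
      dotProduct_transpose_mulVec, smul_eq_mul]
    ring
  have hvv : 0 < v ⬝ᵥ v := by simpa using dotProduct_star_self_pos_iff.mpr hv
  have key : lam * ‖toEuclideanCLM (𝕜 := ℝ) K‖ * (v ⬝ᵥ v) ≤ μ * (v ⬝ᵥ v) := calc
    _ = lam * (‖toEuclideanCLM (𝕜 := ℝ) K‖ * (v ⬝ᵥ v)) := mul_assoc ..
    _ ≤ lam * (v ⬝ᵥ ((1 : Matrix (Fin N) (Fin N) ℝ) ⊗ₖ S) *ᵥ v) :=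
        mul_le_mul_of_nonpos_left (dotProduct_one_kronecker_mulVec_le (fun x =>
          (hSK x).trans_le (dotProduct_mulVec_le_norm_toEuclideanCLM K x)) v) hmin.le
    _ ≤ v ⬝ᵥ (G ⊗ₖ S) *ᵥ v :=
        hG.mul_dotProduct_one_kronecker_mulVec_le (fun i => Finset.inf'_le _ (Finset.mem_univ i))
          hS v
    _ = μ * (v ⬝ᵥ v) := by rw [← hGS, hμ, dotProduct_smul, smul_eq_mul]
  rw [abs_of_neg hmin, neg_mul, neg_neg]
  exact le_of_mul_le_mul_right key hvv
end

section
/- Let F : ℝ^d → ℝ^d be an affine operator F(x) = Ax + a. If there exists a diagonal positive definite matrix H such that HA + AᵀH is positive definite, then F is a uniform P-function: there exists η > 0 such that for all x, y ∈ ℝ^d there is an index h with (F(x) − F(y))_h (x − y)_h ≥ η‖x − y‖₂². -/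
/-!
With `D = diagonal H` and `z = x - y`, one has `zᵀ (D A + Aᵀ D) z = 2 ∑ᵢ Hᵢ (A z)ᵢ zᵢ`, and
positive definiteness bounds this below by `μ ‖z‖²` (minimise the quadratic form on the unit
sphere). Some summand `H_h (A z)_h z_h` is then at least a `1/d` share of the bound, and since
`H_h ≤ ∑ H`, dividing by `H_h` costs at most the factor `∑ H`.
-/

open Matrix

theorem exists_pos_mul_norm_sq_le_of_isHomogeneous_two {E : Type*} [NormedAddCommGroup E]
    [NormedSpace ℝ E] [FiniteDimensional ℝ E] [Nontrivial E] {q : E → ℝ} (hq : Continuous q)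
    (hsmul : ∀ (c : ℝ) z, q (c • z) = c ^ 2 * q z) (hpos : ∀ z ≠ 0, 0 < q z) :
    ∃ μ > 0, ∀ z, μ * ‖z‖ ^ 2 ≤ q z := by
  obtain ⟨u, hu, hmin⟩ := (isCompact_sphere (0 : E) 1).exists_isMinOn
    (NormedSpace.sphere_nonempty.mpr zero_le_one) hq.continuousOn
  have hu1 : ‖u‖ = 1 := by simpa using hu
  refine ⟨q u, hpos u (norm_ne_zero_iff.mp (by simp [hu1])), fun z => ?_⟩
  rcases eq_or_ne z 0 with rfl | hz
  · simp [show q 0 = 0 by simpa using hsmul 0 0]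
  have hz' : ‖z‖ ≠ 0 := norm_ne_zero_iff.mpr hz
  have hmem : ‖z‖⁻¹ • z ∈ Metric.sphere (0 : E) 1 := by simp [norm_smul, hz']
  calc q u * ‖z‖ ^ 2 ≤ q (‖z‖⁻¹ • z) * ‖z‖ ^ 2 := by gcongr; exact hmin hmem
    _ = q z := by rw [hsmul]; field_simp

theorem Matrix.PosDef.exists_pos_mul_sum_sq_le_dotProduct_mulVec {n : Type*} [Fintype n]
    [Nonempty n] {M : Matrix n n ℝ} (hM : M.PosDef) :
    ∃ μ > 0, ∀ z : n → ℝ, μ * ∑ i, z i ^ 2 ≤ z ⬝ᵥ M *ᵥ z := by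
  have hq : Continuous fun z : EuclideanSpace ℝ n => z.ofLp ⬝ᵥ M *ᵥ z.ofLp := by fun_prop
  obtain ⟨μ, hμ, hle⟩ := exists_pos_mul_norm_sq_le_of_isHomogeneous_two hq
    (fun c z => by
      simp only [WithLp.ofLp_smul, mulVec_smul, dotProduct_smul, smul_dotProduct, smul_eq_mul]
      ring)
    (fun z hz => by simpa using hM.dotProduct_mulVec_pos (x := z.ofLp) (by simpa using hz))
  refine ⟨μ, hμ, fun z => ?_⟩
  simpa [EuclideanSpace.norm_sq_eq] using hle (WithLp.toLp 2 z)

theorem Matrix.dotProduct_diagonal_mul_add_transpose_mul_diagonal_mulVec {n R : Type*}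
    [Fintype n] [DecidableEq n] [CommSemiring R] (D : n → R) (A : Matrix n n R) (z : n → R) :
    z ⬝ᵥ (diagonal D * A + Aᵀ * diagonal D) *ᵥ z = 2 * ∑ i, D i * ((A *ᵥ z) i * z i) := by
  rw [add_mulVec, dotProduct_add, ← mulVec_mulVec, dotProduct_mulVec z (Aᵀ * diagonal D),
    ← vecMul_vecMul, vecMul_transpose, dotProduct_comm, two_mul]
  simp only [dotProduct, mulVec_diagonal, vecMul_diagonal]
  congr 1 <;> exact Finset.sum_congr rfl fun i _ => by ring

theorem exists_div_card_mul_sum_le_of_le_sum_mul {ι : Type*} [Fintype ι] [Nonempty ι]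
    {w v : ι → ℝ} (hw : ∀ i, 0 < w i) {c : ℝ} (hc : 0 ≤ c) (h : c ≤ ∑ i, w i * v i) :
    ∃ i, c / (Fintype.card ι * ∑ j, w j) ≤ v i := by
  have hcard : (0 : ℝ) < Fintype.card ι := Nat.cast_pos.mpr Fintype.card_pos
  obtain ⟨i, -, hi⟩ := Finset.exists_le_of_sum_le (f := fun _ => c / Fintype.card ι)
    (g := fun i => w i * v i) Finset.univ_nonempty
    (by simpa [Finset.card_univ, mul_div_cancel₀ _ hcard.ne'] using h)
  have hwi : w i ≤ ∑ j, w j := Finset.single_le_sum (fun j _ => (hw j).le) (Finset.mem_univ i)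
  have hvi : 0 ≤ v i := nonneg_of_mul_nonneg_right (hi.trans' (by positivity)) (hw i)
  refine ⟨i, ?_⟩
  rw [← div_div, div_le_iff₀ ((hw i).trans_le hwi), mul_comm]
  exact hi.trans (by gcongr)

/-- If `F(x) = Ax + a` and there is a diagonal positive definite `H` with
`HA + AᵀH ≻ 0`, then `F` is a uniform P-function: there is `η > 0` such that for all
`x, y` some coordinate `h` satisfies `(F(x) - F(y))_h (x - y)_h ≥ η ‖x - y‖₂²`. -/
theorem stmt5 (d : ℕ) (hd : 0 < d) (A : Matrix (Fin d) (Fin d) ℝ) (a : Fin d → ℝ)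
    (H : Fin d → ℝ) (hH : ∀ i, 0 < H i)
    (hpd : (Matrix.diagonal H * A + Aᵀ * Matrix.diagonal H).PosDef) :
    ∃ η > (0 : ℝ), ∀ x y : Fin d → ℝ, ∃ h : Fin d,
      η * ∑ i, (x i - y i) ^ 2 ≤
        ((A.mulVec x + a) h - (A.mulVec y + a) h) * (x h - y h) := by
  have : NeZero d := ⟨hd.ne'⟩
  obtain ⟨μ, hμ, hcoercive⟩ := hpd.exists_pos_mul_sum_sq_le_dotProduct_mulVec
  have hHsum : 0 < ∑ j, H j := Finset.sum_pos (fun j _ => hH j) Finset.univ_nonempty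
  refine ⟨μ / 2 / (d * ∑ j, H j), by positivity, fun x y => ?_⟩
  have hquad : μ * ∑ i, (x - y) i ^ 2 ≤ 2 * ∑ i, H i * ((A *ᵥ (x - y)) i * (x - y) i) := by
    rw [← dotProduct_diagonal_mul_add_transpose_mul_diagonal_mulVec]
    exact hcoercive (x - y)
  obtain ⟨h, hh⟩ := exists_div_card_mul_sum_le_of_le_sum_mul
    (v := fun i => (A *ᵥ (x - y)) i * (x - y) i) hH
    (by positivity : 0 ≤ μ / 2 * ∑ i, (x - y) i ^ 2) (by linarith)
  refine ⟨h, ?_⟩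
  simpa [mulVec_sub, div_mul_eq_mul_div] using hh
end

section
/- Let A ∈ ℝ^{d×d}, η > 0, and suppose for every w ∈ ℝ^d there exists a diagonal positive definite matrix H_w with wᵀ H_w A w ≥ η‖w‖₂², and let M := sup_w λ_max(H_w) < ∞. Then for every w ∈ ℝ^d there exists an index h ∈ {1,…,d} such that w_h (A w)_h ≥ (η/(d·M))‖w‖₂². -/
open Matrix

/-- If for every `w` there is a diagonal positive definite matrix `H_w`
(with entries bounded by `M`, i.e. `λ_max(H_w) ≤ M`) such that
`wᵀ H_w A w ≥ η ‖w‖₂²`, then for every `w` some index `h` satisfies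
`w_h (Aw)_h ≥ (η / (d·M)) ‖w‖₂²`. -/
theorem stmt6 (d : ℕ) (hd : 0 < d) (A : Matrix (Fin d) (Fin d) ℝ)
    (η M : ℝ) (hη : 0 < η)
    (hH : ∀ w : Fin d → ℝ, ∃ H : Fin d → ℝ, (∀ i, 0 < H i) ∧ (∀ i, H i ≤ M) ∧
      η * ∑ i, w i ^ 2 ≤ ∑ i, H i * (w i * A.mulVec w i)) :
    ∀ w : Fin d → ℝ, ∃ h : Fin d,
      η / (d * M) * ∑ i, w i ^ 2 ≤ w h * A.mulVec w h := by
  intro w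
  obtain ⟨H, hpos, hle, hsum⟩ := hH w
  have hdpos : (0:ℝ) < d := by exact_mod_cast hd
  haveI : Nonempty (Fin d) := ⟨⟨0, hd⟩⟩
  have hM : 0 < M := lt_of_lt_of_le (hpos (Classical.arbitrary _)) (hle _)
  have hS : 0 ≤ ∑ i, w i ^ 2 := Finset.sum_nonneg fun i _ => sq_nonneg _
  set S := ∑ i, w i ^ 2 with hSdef
  have hconst : ∑ _i : Fin d, (η * S / d) = η * S := by
    rw [Finset.sum_const, Finset.card_univ, Fintype.card_fin, nsmul_eq_mul]
    field_simp
  have hex : ∃ i ∈ Finset.univ, (η * S / d) ≤ H i * (w i * A.mulVec w i) := by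
    apply Finset.exists_le_of_sum_le Finset.univ_nonempty
    rw [hconst]; exact hsum
  obtain ⟨i, _, hi⟩ := hex
  refine ⟨i, ?_⟩
  have hx : 0 ≤ w i * A.mulVec w i := by
    by_contra hneg
    push_neg at hneg
    have : H i * (w i * A.mulVec w i) < 0 := mul_neg_of_pos_of_neg (hpos i) hneg
    have h0 : 0 ≤ η * S / d := by positivity
    linarith
  have hMx : η * S / d ≤ M * (w i * A.mulVec w i) :=
    le_trans hi (mul_le_mul_of_nonneg_right (hle i) hx)
  rw [div_mul_eq_mul_div, div_le_iff₀ (by positivity)] at *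
  nlinarith [mul_le_mul_of_nonneg_right hMx hdpos.le]
end

section
/- Consider a network game whose game Jacobian has the form ∇F(x) = D(x) + K(x)(G ⊗ I_n) with D(x) symmetric block-diagonal satisfying D(x) ⪰ κ₁ I and K(x) block-diagonal with ‖K(x)‖₂ ≤ κ₂. If α₂ := κ₁ − κ₂‖G‖₂ > 0, then (∇F(x) + ∇F(x)ᵀ)/2 ⪰ α₂ I for all x, hence F is strongly monotone with constant α₂. -/
open Matrix Kronecker
open scoped RealInnerProductSpace

private lemma kron_norm_le (N n : ℕ) (G : Matrix (Fin N) (Fin N) ℝ)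
    (v : EuclideanSpace ℝ (Fin N × Fin n)) :
    ‖Matrix.toEuclideanCLM (𝕜 := ℝ) (G ⊗ₖ (1 : Matrix (Fin n) (Fin n) ℝ)) v‖ ≤
      ‖Matrix.toEuclideanCLM (𝕜 := ℝ) G‖ * ‖v‖ := by
  set A := Matrix.toEuclideanCLM (𝕜 := ℝ) G with hA
  set w := Matrix.toEuclideanCLM (𝕜 := ℝ) (G ⊗ₖ (1 : Matrix (Fin n) (Fin n) ℝ)) v with hwdef
  set va : Fin n → EuclideanSpace ℝ (Fin N) := fun a => WithLp.toLp 2 (fun j => v (j, a)) with hva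
  have hnn : (0:ℝ) ≤ ‖A‖ * ‖v‖ := mul_nonneg (norm_nonneg _) (norm_nonneg _)
  have hw : ∀ i a, w (i, a) = (A (va a)) i := by
    intro i a
    show ((G ⊗ₖ (1 : Matrix (Fin n) (Fin n) ℝ)).mulVec v) (i, a)
        = G.mulVec (va a) i
    simp [Matrix.mulVec, dotProduct, Matrix.one_apply, Fintype.sum_prod_type,
      mul_ite, mul_comm, hva]
  have hsq : ‖w‖ ^ 2 ≤ (‖A‖ * ‖v‖) ^ 2 := by
    have h1 : ‖w‖ ^ 2 = ∑ a : Fin n, ‖A (va a)‖ ^ 2 := by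
      rw [← real_inner_self_eq_norm_sq, PiLp.inner_apply]
      simp only [RCLike.inner_apply, conj_trivial]
      rw [Fintype.sum_prod_type, Finset.sum_comm]
      congr 1
      ext a
      rw [← real_inner_self_eq_norm_sq, PiLp.inner_apply]
      simp only [RCLike.inner_apply, conj_trivial]
      congr 1
      ext i
      rw [hw i a]
    have h2 : ‖v‖ ^ 2 = ∑ a : Fin n, ‖va a‖ ^ 2 := by
      rw [← real_inner_self_eq_norm_sq, PiLp.inner_apply]
      simp only [RCLike.inner_apply, conj_trivial]
      rw [Fintype.sum_prod_type, Finset.sum_comm]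
      congr 1
      ext a
      rw [← real_inner_self_eq_norm_sq, PiLp.inner_apply]
      simp [hva, sq]
    rw [h1, mul_pow, h2, Finset.mul_sum]
    apply Finset.sum_le_sum
    intro a _
    calc ‖A (va a)‖ ^ 2 ≤ (‖A‖ * ‖va a‖) ^ 2 :=
          pow_le_pow_left₀ (norm_nonneg _) (A.le_opNorm (va a)) 2
      _ = ‖A‖ ^ 2 * ‖va a‖ ^ 2 := by ring
  nlinarith [norm_nonneg w, hnn]


/-- For a network game Jacobian `∇F(x) = D(x) + K(x)(G ⊗ I_n)` with
`D(x)` symmetric block-diagonal, `D(x) ⪰ κ₁ I`, `K(x)` block-diagonal with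
`‖K(x)‖₂ ≤ κ₂`, if `α₂ = κ₁ - κ₂‖G‖₂ > 0` then `(∇F(x) + ∇F(x)ᵀ)/2 ⪰ α₂ I`
(equivalently `⟪∇F(x)v, v⟫ ≥ α₂‖v‖²` for all `v`), and hence `F` is strongly
monotone on the convex set `X` with constant `α₂`. -/
theorem stmt9 (N n : ℕ) (G : Matrix (Fin N) (Fin N) ℝ)
    (hGnn : ∀ i j, 0 ≤ G i j) (hGd : ∀ i, G i i = 0)
    (κ₁ κ₂ α₂ : ℝ) (hκ₂ : 0 ≤ κ₂)
    (X : Set (EuclideanSpace ℝ (Fin N × Fin n))) (hX : Convex ℝ X)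
    (F : EuclideanSpace ℝ (Fin N × Fin n) → EuclideanSpace ℝ (Fin N × Fin n))
    (D K J : EuclideanSpace ℝ (Fin N × Fin n) → Matrix (Fin N × Fin n) (Fin N × Fin n) ℝ)
    (hJ : ∀ x, J x = D x + K x * (G ⊗ₖ (1 : Matrix (Fin n) (Fin n) ℝ)))
    (hDsym : ∀ x, (D x).IsHermitian)
    (hDblk : ∀ x i a j b, i ≠ j → D x (i, a) (j, b) = 0)
    (hKblk : ∀ x i a j b, i ≠ j → K x (i, a) (j, b) = 0)
    (hD : ∀ x, (D x - κ₁ • (1 : Matrix (Fin N × Fin n) (Fin N × Fin n) ℝ)).PosSemidef)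
    (hK : ∀ x, ‖Matrix.toEuclideanCLM (𝕜 := ℝ) (K x)‖ ≤ κ₂)
    (hα : α₂ = κ₁ - κ₂ * ‖Matrix.toEuclideanCLM (𝕜 := ℝ) G‖) (hα0 : 0 < α₂)
    (hF : ∀ x ∈ X, HasFDerivWithinAt F (Matrix.toEuclideanCLM (𝕜 := ℝ) (J x)) X x) :
    (∀ x, ∀ v : EuclideanSpace ℝ (Fin N × Fin n),
        α₂ * ‖v‖ ^ 2 ≤ ⟪Matrix.toEuclideanCLM (𝕜 := ℝ) (J x) v, v⟫) ∧
    (∀ x ∈ X, ∀ y ∈ X, α₂ * ‖x - y‖ ^ 2 ≤ ⟪F x - F y, x - y⟫) := by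
  have part1 : ∀ x, ∀ v : EuclideanSpace ℝ (Fin N × Fin n),
      α₂ * ‖v‖ ^ 2 ≤ ⟪Matrix.toEuclideanCLM (𝕜 := ℝ) (J x) v, v⟫ := by
    intro x v
    set w := Matrix.toEuclideanCLM (𝕜 := ℝ) (G ⊗ₖ (1 : Matrix (Fin n) (Fin n) ℝ)) v with hwdef
    have hsplit : Matrix.toEuclideanCLM (𝕜 := ℝ) (J x) v
        = Matrix.toEuclideanCLM (𝕜 := ℝ) (D x) v + Matrix.toEuclideanCLM (𝕜 := ℝ) (K x) w := by
      rw [hJ, map_add, _root_.map_mul]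
      rfl
    -- D part
    have hDdot : κ₁ * ‖v‖ ^ 2 ≤ ⟪Matrix.toEuclideanCLM (𝕜 := ℝ) (D x) v, v⟫ := by
      have hps := (hD x).dotProduct_mulVec_nonneg v.ofLp
      have hinner : ⟪Matrix.toEuclideanCLM (𝕜 := ℝ) (D x) v, v⟫
          = v ⬝ᵥ (D x).mulVec v := by
        rw [PiLp.inner_apply]
        simp only [RCLike.inner_apply, conj_trivial]
        rw [dotProduct_comm]
        rw [Matrix.ofLp_toEuclideanCLM, dotProduct_comm]
        rfl
      have hnv : ‖v‖ ^ 2 = v ⬝ᵥ v := by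
        rw [← real_inner_self_eq_norm_sq, PiLp.inner_apply]
        simp [dotProduct, sq]
      rw [hinner, hnv]
      have : (star v) ⬝ᵥ ((D x - κ₁ • (1 : Matrix (Fin N × Fin n) (Fin N × Fin n) ℝ)).mulVec v)
          = v ⬝ᵥ (D x).mulVec v - κ₁ * (v ⬝ᵥ v) := by
        simp [Matrix.sub_mulVec, Matrix.smul_mulVec, Matrix.one_mulVec,
          dotProduct_sub, dotProduct_smul, smul_eq_mul]
      rw [this] at hps
      linarith
    -- K part
    have hKw : ‖Matrix.toEuclideanCLM (𝕜 := ℝ) (K x) w‖ ≤ κ₂ * (‖Matrix.toEuclideanCLM (𝕜 := ℝ) G‖ * ‖v‖) := by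
      calc ‖Matrix.toEuclideanCLM (𝕜 := ℝ) (K x) w‖
          ≤ ‖Matrix.toEuclideanCLM (𝕜 := ℝ) (K x)‖ * ‖w‖ := (Matrix.toEuclideanCLM (𝕜 := ℝ) (K x)).le_opNorm w
        _ ≤ κ₂ * (‖Matrix.toEuclideanCLM (𝕜 := ℝ) G‖ * ‖v‖) := by
            apply mul_le_mul (hK x) (kron_norm_le N n G v) (norm_nonneg _) hκ₂
    have hKdot : -(κ₂ * ‖Matrix.toEuclideanCLM (𝕜 := ℝ) G‖ * ‖v‖ ^ 2)
        ≤ ⟪Matrix.toEuclideanCLM (𝕜 := ℝ) (K x) w, v⟫ := by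
      have h1 := abs_real_inner_le_norm (Matrix.toEuclideanCLM (𝕜 := ℝ) (K x) w) v
      have h2 : ‖Matrix.toEuclideanCLM (𝕜 := ℝ) (K x) w‖ * ‖v‖
          ≤ κ₂ * ‖Matrix.toEuclideanCLM (𝕜 := ℝ) G‖ * ‖v‖ ^ 2 := by
        calc ‖Matrix.toEuclideanCLM (𝕜 := ℝ) (K x) w‖ * ‖v‖
            ≤ (κ₂ * (‖Matrix.toEuclideanCLM (𝕜 := ℝ) G‖ * ‖v‖)) * ‖v‖ :=
              mul_le_mul_of_nonneg_right hKw (norm_nonneg _)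
          _ = κ₂ * ‖Matrix.toEuclideanCLM (𝕜 := ℝ) G‖ * ‖v‖ ^ 2 := by ring
      have := neg_abs_le (⟪Matrix.toEuclideanCLM (𝕜 := ℝ) (K x) w, v⟫)
      linarith
    rw [hsplit, inner_add_left, hα]
    have hv2 : (0:ℝ) ≤ ‖v‖ ^ 2 := sq_nonneg _
    nlinarith
  refine ⟨part1, ?_⟩
  intro x hx y hy
  set u := x - y with hu
  set γ : ℝ → EuclideanSpace ℝ (Fin N × Fin n) := fun t => y + t • u with hγ
  have hγmem : ∀ t ∈ Set.Icc (0:ℝ) 1, γ t ∈ X := by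
    intro t ht
    have : γ t = (1 - t) • y + t • x := by
      simp only [hγ, hu]
      module
    rw [this]
    exact hX hy hx (by linarith [ht.2]) ht.1 (by ring)
  set c : ℝ := α₂ * ‖u‖ ^ 2 with hc
  set ψ : ℝ → ℝ := fun t => ⟪u, F (γ t)⟫ - c * t with hψ
  have hψderiv : ∀ t ∈ Set.Icc (0:ℝ) 1,
      HasDerivWithinAt ψ (⟪u, Matrix.toEuclideanCLM (𝕜 := ℝ) (J (γ t)) u⟫ - c) (Set.Icc 0 1) t := by
    intro t ht
    have hγd : HasDerivWithinAt γ u (Set.Icc (0:ℝ) 1) t := by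
      have : HasDerivAt (fun s : ℝ => y + s • u) u t := by
        simpa using ((hasDerivAt_id t).smul_const u).const_add y
      exact this.hasDerivWithinAt
    have hcomp : HasDerivWithinAt (fun s => F (γ s))
        (Matrix.toEuclideanCLM (𝕜 := ℝ) (J (γ t)) u) (Set.Icc 0 1) t :=
      (hF (γ t) (hγmem t ht)).comp_hasDerivWithinAt t hγd hγmem
    have hinner : HasDerivWithinAt (fun s => ⟪u, F (γ s)⟫)
        (⟪u, Matrix.toEuclideanCLM (𝕜 := ℝ) (J (γ t)) u⟫) (Set.Icc 0 1) t := by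
      have := (innerSL ℝ u).hasFDerivAt.comp_hasDerivWithinAt t hcomp
      exact this
    have hc' : HasDerivWithinAt (fun s : ℝ => c * s) c (Set.Icc 0 1) t := by
      simpa using (hasDerivWithinAt_id t (Set.Icc (0:ℝ) 1)).const_mul c
    exact hinner.sub hc'
  have hmono : MonotoneOn ψ (Set.Icc (0:ℝ) 1) := by
    apply monotoneOn_of_hasDerivWithinAt_nonneg (convex_Icc 0 1)
      (fun t ht => (hψderiv t ht).continuousWithinAt)
      (f' := fun t => ⟪u, Matrix.toEuclideanCLM (𝕜 := ℝ) (J (γ t)) u⟫ - c)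
      (fun t ht => ((hψderiv t (interior_subset ht)).mono interior_subset))
    intro t _
    have h1 := part1 (γ t) u
    have h2 : ⟪Matrix.toEuclideanCLM (𝕜 := ℝ) (J (γ t)) u, u⟫
        = ⟪u, Matrix.toEuclideanCLM (𝕜 := ℝ) (J (γ t)) u⟫ := real_inner_comm _ _
    simp only [hc]
    linarith [h2 ▸ h1]
  have h01 := hmono (Set.mem_Icc.mpr ⟨le_refl 0, zero_le_one⟩)
    (Set.mem_Icc.mpr ⟨zero_le_one, le_refl 1⟩) zero_le_one
  have hγ0 : γ 0 = y := by simp [hγ]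
  have hγ1 : γ 1 = x := by simp [hγ, hu]
  have : ⟪u, F y⟫ ≤ ⟪u, F x⟫ - c := by
    have := h01
    simp only [hψ, hγ0, hγ1, mul_zero, mul_one, sub_zero] at this
    linarith
  have hfin : c ≤ ⟪u, F x - F y⟫ := by
    rw [inner_sub_right]
    linarith
  rw [real_inner_comm] at hfin
  exact hfin
end

section
/- Let F : 𝒳 → ℝ^{Nn}, 𝒳 = 𝒳¹×⋯×𝒳^N ⊆ ℝ^{Nn} a product of nonempty closed convex sets. Suppose F̄ is a uniform block P-function with constant η̄ > 0, with unique zero of the associated variational inequality x̄ ∈ 𝒳 (i.e., F̄^i(x̄)ᵀ(y^i − x̄^i) ≥ 0 for all y^i ∈ 𝒳^i and all i). Let F be another continuous operator with solution x of its variational inequality, and suppose ‖F̄^i(x) − F^i(x)‖₂ ≤ ε for all i. Then ‖x − x̄‖₂ ≤ ε/η̄. -/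
open scoped RealInnerProductSpace

lemma block_norm_le (N n : ℕ) (z : PiLp 2 fun _ : Fin N => EuclideanSpace ℝ (Fin n))
    (i : Fin N) : ‖z i‖ ≤ ‖z‖ := by
  have h := PiLp.norm_sq_eq_of_L2 (fun _ : Fin N => EuclideanSpace ℝ (Fin n)) z
  have h2 : ‖z i‖ ^ 2 ≤ ‖z‖ ^ 2 := by
    rw [h]
    exact Finset.single_le_sum (fun j _ => sq_nonneg ‖z j‖) (Finset.mem_univ i)
  nlinarith [norm_nonneg (z i), norm_nonneg z]

/-- Lipschitz-type stability for variational inequalities under the uniform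
block P-function property. If `F̄` is a uniform block P-function with constant `η̄`, `x̄`
solves VI(𝒳, F̄), `x` solves VI(𝒳, F), and `‖F̄^i(x) − F^i(x)‖ ≤ ε` for all `i`, then
`‖x − x̄‖₂ ≤ ε/η̄`. -/
theorem stmt14 (N n : ℕ) (ηbar ε : ℝ) (hη : 0 < ηbar) (hε : 0 ≤ ε)
    (Xi : Fin N → Set (EuclideanSpace ℝ (Fin n)))
    (hXi : ∀ i, (Xi i).Nonempty ∧ IsClosed (Xi i) ∧ Convex ℝ (Xi i))
    (Fbar F : (PiLp 2 fun _ : Fin N => EuclideanSpace ℝ (Fin n)) →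
      Fin N → EuclideanSpace ℝ (Fin n))
    (hblock : ∀ x y : PiLp 2 fun _ : Fin N => EuclideanSpace ℝ (Fin n),
      (∀ i, x i ∈ Xi i) → (∀ i, y i ∈ Xi i) →
      ∃ i, ηbar * ‖x - y‖ ^ 2 ≤ ⟪Fbar x i - Fbar y i, x i - y i⟫)
    (xbar x : PiLp 2 fun _ : Fin N => EuclideanSpace ℝ (Fin n))
    (hxbar : ∀ i, xbar i ∈ Xi i)
    (hVIbar : ∀ i, ∀ y ∈ Xi i, 0 ≤ ⟪Fbar xbar i, y - xbar i⟫)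
    (hx : ∀ i, x i ∈ Xi i)
    (hVI : ∀ i, ∀ y ∈ Xi i, 0 ≤ ⟪F x i, y - x i⟫)
    (hpert : ∀ i, ‖Fbar x i - F x i‖ ≤ ε) :
    ‖x - xbar‖ ≤ ε / ηbar := by
  obtain ⟨i, hi⟩ := hblock x xbar hx hxbar
  -- VI inequalities
  have h1 : 0 ≤ ⟪Fbar xbar i, x i - xbar i⟫ := hVIbar i (x i) (hx i)
  have h2 : 0 ≤ ⟪F x i, xbar i - x i⟫ := hVI i (xbar i) (hxbar i)
  have hsub : (x - xbar) i = x i - xbar i := rfl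
  -- inner product decomposition
  have key : ηbar * ‖x - xbar‖ ^ 2 ≤ ⟪Fbar x i - F x i, x i - xbar i⟫ := by
    have expand : ⟪Fbar x i - Fbar xbar i, x i - xbar i⟫ =
        ⟪Fbar x i - F x i, x i - xbar i⟫ + ⟪F x i, x i - xbar i⟫
        - ⟪Fbar xbar i, x i - xbar i⟫ := by
      rw [inner_sub_left, inner_sub_left]; ring
    have h2' : ⟪F x i, x i - xbar i⟫ ≤ 0 := by
      have : ⟪F x i, xbar i - x i⟫ = -⟪F x i, x i - xbar i⟫ := by
        rw [← inner_neg_right]; congr 1; abel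
      linarith [h2, this ▸ h2]
    linarith [hi, expand ▸ hi]
  have cs : ⟪Fbar x i - F x i, x i - xbar i⟫ ≤ ε * ‖x - xbar‖ := by
    calc ⟪Fbar x i - F x i, x i - xbar i⟫
        ≤ ‖Fbar x i - F x i‖ * ‖x i - xbar i‖ := real_inner_le_norm _ _
      _ ≤ ε * ‖x - xbar‖ := by
          apply mul_le_mul (hpert i) ?_ (norm_nonneg _) hε
          rw [← hsub]; exact block_norm_le N n (x - xbar) i
  have hkey : ηbar * ‖x - xbar‖ ^ 2 ≤ ε * ‖x - xbar‖ := le_trans key cs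
  rcases eq_or_lt_of_le (norm_nonneg (x - xbar)) with h0 | h0
  · rw [← h0]; positivity
  · rw [le_div_iff₀ hη]
    nlinarith [hkey]
end

section
/- Consider the linear quadratic network game with N > 2 players, strategy sets 𝒳^i = ℝ_{≥0}, complete network G_c = 𝟙𝟙ᵀ − I_N, and operator F(x) = (I_N − (1/(N−1)) G_c) x. Then every vector x = β𝟙 with β ≥ 0 satisfies the variational inequality F(x)ᵀ(y − x) ≥ 0 for all y ∈ ℝ^N_{≥0}; i.e., the game has infinitely many Nash equilibria, even though κ₁ − κ₂|λ_min(G_c)| = 1 − 1/(N−1) > 0. -/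
open Matrix

/-- In the linear quadratic network game with `N > 2` players, strategy
sets `ℝ_{≥0}`, complete network `G_c = 𝟙𝟙ᵀ − I`, and operator
`F(x) = (I − (1/(N−1))G_c)x`, every vector `x = β𝟙` with `β ≥ 0` solves the
variational inequality `F(x)ᵀ(y − x) ≥ 0` for all `y ≥ 0` — infinitely many Nash
equilibria — even though `κ₁ − κ₂|λ_min(G_c)| = 1 − 1/(N−1) > 0`. -/
theorem stmt19 (N : ℕ) (hN : 2 < N) :
    (0 < 1 - 1 / ((N : ℝ) - 1)) ∧
    ∀ β : ℝ, 0 ≤ β → ∀ y : Fin N → ℝ, (∀ i, 0 ≤ y i) →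
      0 ≤ (((1 : Matrix (Fin N) (Fin N) ℝ) -
              (1 / ((N : ℝ) - 1)) •
                (Matrix.of (fun _ _ => (1 : ℝ)) - (1 : Matrix (Fin N) (Fin N) ℝ))).mulVec
            (fun _ => β)) ⬝ᵥ (y - fun _ => β) := by
  have hN3 : (3 : ℝ) ≤ (N : ℝ) := by exact_mod_cast hN
  have hNe : (N : ℝ) - 1 ≠ 0 := by linarith
  constructor
  · have h1 : (1 : ℝ) / ((N : ℝ) - 1) ≤ 1 / 2 := by
      apply one_div_le_one_div_of_le <;> linarith
    linarith
  · intro β hβ y hy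
    have hzero : (((1 : Matrix (Fin N) (Fin N) ℝ) -
              (1 / ((N : ℝ) - 1)) •
                (Matrix.of (fun _ _ => (1 : ℝ)) - (1 : Matrix (Fin N) (Fin N) ℝ))).mulVec
            (fun _ => β)) = 0 := by
      funext i
      simp only [mulVec, dotProduct, Matrix.sub_apply, Matrix.smul_apply, Matrix.one_apply,
        Matrix.of_apply, smul_eq_mul, Pi.zero_apply]
      have h : ∀ x : Fin N,
          ((if i = x then (1:ℝ) else 0) - 1 / ((N:ℝ) - 1) * (1 - if i = x then 1 else 0)) * β
          = (if i = x then β else 0) - 1 / ((N:ℝ) - 1) * β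
              + (if i = x then (1/((N:ℝ)-1))*β else 0) := by
        intro x; by_cases h : i = x <;> simp [h]
      simp only [h, Finset.sum_add_distrib, Finset.sum_sub_distrib, Finset.sum_ite_eq,
        Finset.mem_univ, if_true, Finset.sum_const, Finset.card_univ, Fintype.card_fin,
        nsmul_eq_mul]
      field_simp
      ring
    rw [hzero]
    simp
end
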